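/- arXiv:2508.15084 — 6 statements merged into one kernel-verified Lean document; each statement's English description precedes it below -/
import Mathlib

section
/- Suppose γ_k(Z_0, Z_1) ≤ α, where Z_s is the conditional distribution of the representation Z given S = s. Then the balanced accuracy for predicting S by classifiers g in the affine-transformed RKHS ball G satisfies sup_{g ∈ G} (1/2)(Pr(Ŝ=0|S=0) + Pr(Ŝ=1|S=1)) ≤ (2 + ν^{-1/2} α)/4, where Ŝ ∼ Bernoulli(g(Z)). -/
open MeasureTheory
open scoped RealInnerProductSpace

/-- If `γ_k(Z₀, Z₁) ≤ α` (MMD between the conditional laws of the representation given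
`S = 0` and `S = 1`, for an RKHS with kernel bounded by `ν`, modeled via a feature map
`φ` with evaluation `h(z) = ⟪h, φ z⟫`), then the balanced accuracy for predicting `S`
over the affine-transformed ball `G = {(h+1)/2 : ‖h‖ ≤ ν^{-1/2}}` satisfies
`sup_{g ∈ G} (1/2)((1 − E[g(Z₀)]) + E[g(Z₁)]) ≤ (2 + ν^{-1/2} α)/4`. -/
theorem stmt_3 {Z H : Type*} [MeasurableSpace Z]
    [NormedAddCommGroup H] [InnerProductSpace ℝ H]
    (φ : Z → H) (ν : ℝ) (hν : 0 < ν) (hk : ∀ z, ⟪φ z, φ z⟫ ≤ ν)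
    (P₀ P₁ : Measure Z) [IsProbabilityMeasure P₀] [IsProbabilityMeasure P₁]
    (hInt₀ : ∀ h : H, Integrable (fun z => ⟪h, φ z⟫) P₀)
    (hInt₁ : ∀ h : H, Integrable (fun z => ⟪h, φ z⟫) P₁)
    (α : ℝ) (hα : 0 ≤ α)
    (hMMD : (⨆ h : {h : H // ‖h‖ ≤ 1},
        |(∫ z, ⟪h.1, φ z⟫ ∂P₀) - ∫ z, ⟪h.1, φ z⟫ ∂P₁|) ≤ α) :
    (⨆ h : {h : H // ‖h‖ ≤ (Real.sqrt ν)⁻¹},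
        (1 / 2) * ((1 - ∫ z, (⟪h.1, φ z⟫ + 1) / 2 ∂P₀) + ∫ z, (⟪h.1, φ z⟫ + 1) / 2 ∂P₁))
      ≤ (2 + (Real.sqrt ν)⁻¹ * α) / 4 := by
  have hsν : 0 < Real.sqrt ν := Real.sqrt_pos.mpr hν
  have hφ : ∀ z, ‖φ z‖ ≤ Real.sqrt ν := by
    intro z
    rw [← Real.sqrt_sq (norm_nonneg _)]
    exact Real.sqrt_le_sqrt (by rw [← real_inner_self_eq_norm_sq]; exact hk z)
  -- bound on each integral
  have hbd : ∀ (h : H) (P : Measure Z) [IsProbabilityMeasure P],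
      Integrable (fun z => ⟪h, φ z⟫) P → |∫ z, ⟪h, φ z⟫ ∂P| ≤ ‖h‖ * Real.sqrt ν := by
    intro h P _ hI
    calc |∫ z, ⟪h, φ z⟫ ∂P| ≤ ∫ z, |⟪h, φ z⟫| ∂P := by simpa using norm_integral_le_integral_norm fun z => ⟪h, φ z⟫
      _ ≤ ∫ _z, ‖h‖ * Real.sqrt ν ∂P := by
          refine integral_mono hI.abs (integrable_const _) fun z => ?_
          calc |⟪h, φ z⟫| ≤ ‖h‖ * ‖φ z‖ := abs_real_inner_le_norm _ _
            _ ≤ ‖h‖ * Real.sqrt ν := by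
                exact mul_le_mul_of_nonneg_left (hφ z) (norm_nonneg _)
      _ = ‖h‖ * Real.sqrt ν := by simp
  have hbdd : BddAbove (Set.range fun h : {h : H // ‖h‖ ≤ 1} =>
      |(∫ z, ⟪h.1, φ z⟫ ∂P₀) - ∫ z, ⟪h.1, φ z⟫ ∂P₁|) := by
    refine ⟨2 * Real.sqrt ν, ?_⟩
    rintro x ⟨h, rfl⟩
    have b0 := hbd h.1 P₀ (hInt₀ h.1)
    have b1 := hbd h.1 P₁ (hInt₁ h.1)
    have hn : ‖h.1‖ * Real.sqrt ν ≤ Real.sqrt ν := by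
      nlinarith [h.2, hsν.le]
    calc |(∫ z, ⟪h.1, φ z⟫ ∂P₀) - ∫ z, ⟪h.1, φ z⟫ ∂P₁|
        ≤ |∫ z, ⟪h.1, φ z⟫ ∂P₀| + |∫ z, ⟪h.1, φ z⟫ ∂P₁| := abs_sub _ _
      _ ≤ 2 * Real.sqrt ν := by linarith
  have hterm : ∀ h : H, ‖h‖ ≤ 1 →
      |(∫ z, ⟪h, φ z⟫ ∂P₀) - ∫ z, ⟪h, φ z⟫ ∂P₁| ≤ α := by
    intro h hh
    exact le_trans (le_ciSup hbdd (⟨h, hh⟩ : {h : H // ‖h‖ ≤ 1})) hMMD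
  have hne : Nonempty {h : H // ‖h‖ ≤ (Real.sqrt ν)⁻¹} :=
    ⟨⟨0, by simp [le_of_lt (inv_pos.mpr hsν)]⟩⟩
  refine ciSup_le fun h => ?_
  -- compute the integrals
  have hint : ∀ (P : Measure Z) [IsProbabilityMeasure P], Integrable (fun z => ⟪h.1, φ z⟫) P →
      ∫ z, (⟪h.1, φ z⟫ + 1) / 2 ∂P = ((∫ z, ⟪h.1, φ z⟫ ∂P) + 1) / 2 := by
    intro P _ hI
    rw [integral_div, integral_add hI (integrable_const 1), integral_const]
    simp
  rw [hint P₀ (hInt₀ h.1), hint P₁ (hInt₁ h.1)]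
  set E₀ := ∫ z, ⟪h.1, φ z⟫ ∂P₀
  set E₁ := ∫ z, ⟪h.1, φ z⟫ ∂P₁
  -- reduce to E₁ - E₀ ≤ (√ν)⁻¹ * α
  have key : E₁ - E₀ ≤ (Real.sqrt ν)⁻¹ * α := by
    set h' : H := Real.sqrt ν • h.1 with hh'
    have hh'n : ‖h'‖ ≤ 1 := by
      rw [hh', norm_smul, Real.norm_eq_abs, abs_of_pos hsν]
      calc Real.sqrt ν * ‖h.1‖ ≤ Real.sqrt ν * (Real.sqrt ν)⁻¹ :=
            mul_le_mul_of_nonneg_left h.2 hsν.le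
        _ = 1 := mul_inv_cancel₀ hsν.ne'
    have heq : ∀ z, ⟪h.1, φ z⟫ = (Real.sqrt ν)⁻¹ * ⟪h', φ z⟫ := by
      intro z
      rw [hh', real_inner_smul_left]
      field_simp
    have hE₀ : E₀ = (Real.sqrt ν)⁻¹ * ∫ z, ⟪h', φ z⟫ ∂P₀ := by
      simp only [E₀, heq]; rw [integral_const_mul]
    have hE₁ : E₁ = (Real.sqrt ν)⁻¹ * ∫ z, ⟪h', φ z⟫ ∂P₁ := by
      simp only [E₁, heq]; rw [integral_const_mul]
    have := hterm h' hh'n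
    have habs : (∫ z, ⟪h', φ z⟫ ∂P₁) - ∫ z, ⟪h', φ z⟫ ∂P₀ ≤ α := by
      have := abs_le.mp this
      linarith [this.1]
    rw [hE₀, hE₁, ← mul_sub]
    exact mul_le_mul_of_nonneg_left habs (inv_pos.mpr hsν).le
  linarith
end

section
/- For any probability distributions Z^0, Z^1 on Z with MMD γ_k(Z^0, Z^1) ≥ β (kernel bounded by ν), there exists a measurable function h: Z → [0,1] whose balanced accuracy for distinguishing Z^0 from Z^1 is at least (2 + ν^{-1/2} β)/4, i.e., sup_{h: Z → [0,1]} (1/2)((1 − E[h(Z^0)]) + E[h(Z^1)]) ≥ (2 + ν^{-1/2}β)/4. -/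
open MeasureTheory
open scoped RealInnerProductSpace

/-- If `γ_k(Z⁰, Z¹) ≥ β` for a kernel bounded by `ν` (RKHS modeled via a feature map `φ`
with evaluation `h(z) = ⟪h, φ z⟫`), then the supremum of the balanced accuracy
`(1/2)((1 − E[h(Z⁰)]) + E[h(Z¹)])` over all measurable `h : Z → [0,1]` is at least
`(2 + ν^{-1/2} β)/4`. -/
theorem stmt_4 {Z H : Type*} [MeasurableSpace Z]
    [NormedAddCommGroup H] [InnerProductSpace ℝ H]
    (φ : Z → H) (ν : ℝ) (hν : 0 < ν) (hk : ∀ z, ⟪φ z, φ z⟫ ≤ ν)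
    (P₀ P₁ : Measure Z) [IsProbabilityMeasure P₀] [IsProbabilityMeasure P₁]
    (hInt₀ : ∀ h : H, Integrable (fun z => ⟪h, φ z⟫) P₀)
    (hInt₁ : ∀ h : H, Integrable (fun z => ⟪h, φ z⟫) P₁)
    (β : ℝ) (hβ : 0 ≤ β)
    (hMMD : β ≤ ⨆ h : {h : H // ‖h‖ ≤ 1},
        |(∫ z, ⟪h.1, φ z⟫ ∂P₀) - ∫ z, ⟪h.1, φ z⟫ ∂P₁|) :
    (2 + (Real.sqrt ν)⁻¹ * β) / 4
      ≤ ⨆ h : {h : Z → ℝ // Measurable h ∧ ∀ z, h z ∈ Set.Icc (0 : ℝ) 1},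
          (1 / 2) * ((1 - ∫ z, h.1 z ∂P₀) + ∫ z, h.1 z ∂P₁) := by
  classical
  set c := (Real.sqrt ν)⁻¹ with hc_def
  have hsν : 0 < Real.sqrt ν := Real.sqrt_pos.mpr hν
  have hc : 0 < c := inv_pos.mpr hsν
  have hφ : ∀ z, ‖φ z‖ ≤ Real.sqrt ν := by
    intro z
    rw [show ‖φ z‖ = Real.sqrt (‖φ z‖ ^ 2) by rw [Real.sqrt_sq (norm_nonneg _)]]
    exact Real.sqrt_le_sqrt (by rw [← real_inner_self_eq_norm_sq]; exact hk z)
  set T := ⨆ h : {h : Z → ℝ // Measurable h ∧ ∀ z, h z ∈ Set.Icc (0 : ℝ) 1},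
      (1 / 2) * ((1 - ∫ z, h.1 z ∂P₀) + ∫ z, h.1 z ∂P₁) with hT_def
  have hbdd : BddAbove (Set.range fun h : {h : Z → ℝ // Measurable h ∧ ∀ z, h z ∈ Set.Icc (0:ℝ) 1}
      => (1/2) * ((1 - ∫ z, h.1 z ∂P₀) + ∫ z, h.1 z ∂P₁)) := by
    refine ⟨1, ?_⟩
    rintro x ⟨⟨h, hm, hb⟩, rfl⟩
    have hint : Integrable h P₁ := by
      refine Integrable.mono (integrable_const (1:ℝ)) hm.aestronglyMeasurable ?_
      filter_upwards with z
      rw [Real.norm_eq_abs, abs_of_nonneg (hb z).1, norm_one]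
      exact (hb z).2
    have h0 : 0 ≤ ∫ z, h z ∂P₀ := integral_nonneg fun z => (hb z).1
    have h1 : ∫ z, h z ∂P₁ ≤ 1 := by
      calc ∫ z, h z ∂P₁ ≤ ∫ _, (1:ℝ) ∂P₁ :=
            integral_mono hint (integrable_const 1) fun z => (hb z).2
        _ = 1 := by simp
    simp only
    linarith
  have key : ∀ h : H, ‖h‖ ≤ 1 →
      (2 + c * |(∫ z, ⟪h, φ z⟫ ∂P₀) - ∫ z, ⟪h, φ z⟫ ∂P₁|) / 4 ≤ T := by
    intro h hh
    set g := if (∫ z, ⟪h, φ z⟫ ∂P₀) ≤ ∫ z, ⟪h, φ z⟫ ∂P₁ then h else -h with hg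
    have hgnorm : ‖g‖ ≤ 1 := by rw [hg]; split <;> simpa using hh
    have hneg : (∫ z, ⟪-h, φ z⟫ ∂P₀) = -∫ z, ⟪h, φ z⟫ ∂P₀ := by
      simp [inner_neg_left, integral_neg]
    have hneg' : (∫ z, ⟪-h, φ z⟫ ∂P₁) = -∫ z, ⟪h, φ z⟫ ∂P₁ := by
      simp [inner_neg_left, integral_neg]
    have hdiff : (∫ z, ⟪g, φ z⟫ ∂P₁) - ∫ z, ⟪g, φ z⟫ ∂P₀
        = |(∫ z, ⟪h, φ z⟫ ∂P₀) - ∫ z, ⟪h, φ z⟫ ∂P₁| := by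
      rw [hg]; split_ifs with hsplit
      · rw [abs_of_nonpos (by linarith)]; ring
      · push_neg at hsplit
        rw [abs_of_nonneg (by linarith), hneg, hneg']
        ring
    have hFb : ∀ z, |⟪g, φ z⟫| ≤ Real.sqrt ν := by
      intro z
      refine (abs_real_inner_le_norm g (φ z)).trans ?_
      calc ‖g‖ * ‖φ z‖ ≤ 1 * Real.sqrt ν :=
            mul_le_mul hgnorm (hφ z) (norm_nonneg _) zero_le_one
        _ = Real.sqrt ν := one_mul _
    have hcF : ∀ z, |c * ⟪g, φ z⟫| ≤ 1 := by
      intro z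
      rw [abs_mul, abs_of_pos hc]
      calc c * |⟪g, φ z⟫| ≤ c * Real.sqrt ν := by nlinarith [hFb z]
        _ = 1 := inv_mul_cancel₀ (ne_of_gt hsν)
    have hmeas : AEStronglyMeasurable (fun z => ⟪g, φ z⟫) (P₀ + P₁) := by
      rw [aestronglyMeasurable_add_measure_iff]
      exact ⟨(hInt₀ g).1, (hInt₁ g).1⟩
    set F' := hmeas.mk _ with hF'
    have hF'meas : Measurable F' := hmeas.stronglyMeasurable_mk.measurable
    set f := fun z => max 0 (min 1 ((1 + c * F' z) / 2)) with hf
    have hfmeas : Measurable f :=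
      measurable_const.max (measurable_const.min
        (((hF'meas.const_mul c).const_add 1).div_const 2))
    have hfmem : ∀ z, f z ∈ Set.Icc (0:ℝ) 1 :=
      fun z => ⟨le_max_left _ _, max_le zero_le_one (min_le_left _ _)⟩
    have hae : ∀ᵐ z ∂(P₀ + P₁), f z = (1 + c * ⟪g, φ z⟫) / 2 := by
      filter_upwards [hmeas.ae_eq_mk] with z hz
      have hb := abs_le.mp (hcF z)
      simp only [hf]
      rw [hF', ← hz]
      rw [min_eq_right (by linarith [hb.2]), max_eq_right (by linarith [hb.1])]
    have hae₀ : ∀ᵐ z ∂P₀, f z = (1 + c * ⟪g, φ z⟫) / 2 :=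
      hae.filter_mono (ae_mono (Measure.le_add_right le_rfl))
    have hae₁ : ∀ᵐ z ∂P₁, f z = (1 + c * ⟪g, φ z⟫) / 2 :=
      hae.filter_mono (ae_mono (Measure.le_add_left le_rfl))
    have hI₀ : ∫ z, f z ∂P₀ = (1 + c * ∫ z, ⟪g, φ z⟫ ∂P₀) / 2 := by
      rw [integral_congr_ae hae₀, integral_div,
        integral_add (integrable_const 1) ((hInt₀ g).const_mul c),
        integral_const]
      simp [integral_const_mul]
    have hI₁ : ∫ z, f z ∂P₁ = (1 + c * ∫ z, ⟪g, φ z⟫ ∂P₁) / 2 := by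
      rw [integral_congr_ae hae₁, integral_div,
        integral_add (integrable_const 1) ((hInt₁ g).const_mul c),
        integral_const]
      simp [integral_const_mul]
    have hle : (1/2) * ((1 - ∫ z, f z ∂P₀) + ∫ z, f z ∂P₁) ≤ T :=
      le_ciSup hbdd (⟨f, hfmeas, hfmem⟩ :
        {h : Z → ℝ // Measurable h ∧ ∀ z, h z ∈ Set.Icc (0:ℝ) 1})
    rw [hI₀, hI₁] at hle
    rw [← hdiff]
    set I₀ := ∫ z, ⟪g, φ z⟫ ∂P₀
    set I₁ := ∫ z, ⟪g, φ z⟫ ∂P₁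
    have hexp : c * (I₁ - I₀) = c * I₁ - c * I₀ := by ring
    rw [hexp]
    linarith
  have hne : Nonempty {h : H // ‖h‖ ≤ 1} := ⟨⟨0, by simp⟩⟩
  have hS : (⨆ h : {h : H // ‖h‖ ≤ 1},
      |(∫ z, ⟪h.1, φ z⟫ ∂P₀) - ∫ z, ⟪h.1, φ z⟫ ∂P₁|) ≤ (4 * T - 2) / c := by
    apply ciSup_le
    intro h
    have hk' := key h.1 h.2
    rw [le_div_iff₀ hc, mul_comm]
    linarith
  have hβ' : β ≤ (4 * T - 2) / c := le_trans hMMD hS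
  rw [le_div_iff₀ hc] at hβ'
  have hcomm : β * c = c * β := mul_comm _ _
  linarith
end

section
/- If sup_z k(z,z) ≤ ν, then for any probability measures P and Q, the MMD satisfies γ_k(P, Q) ≤ 2√ν · d_TV(P, Q), where d_TV is the total variation distance. -/
open MeasureTheory
open scoped RealInnerProductSpace

lemma aux_set_integral_diff {Z : Type*} [MeasurableSpace Z] (μ ν : Measure Z)
    [IsFiniteMeasure μ] [IsFiniteMeasure ν] (S : Set Z) (hS : MeasurableSet S)
    (hle : ν.restrict S ≤ μ.restrict S) (f : Z → ℝ) (C : ℝ)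
    (hf : ∀ z, |f z| ≤ C) (hfμ : Integrable f μ) (hfν : Integrable f ν) :
    |(∫ z in S, f z ∂μ) - ∫ z in S, f z ∂ν| ≤ C * ((μ S).toReal - (ν S).toReal) := by
  have h1 : ∫ z in S, (f z + C) ∂ν ≤ ∫ z in S, (f z + C) ∂μ := by
    refine integral_mono_measure hle ?_ ((hfμ.restrict).add (integrable_const C))
    · filter_upwards with z
      have := (abs_le.1 (hf z)).1
      simp only [Pi.zero_apply]; linarith
  have h2 : ∫ z in S, (C - f z) ∂ν ≤ ∫ z in S, (C - f z) ∂μ := by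
    refine integral_mono_measure hle ?_ ((integrable_const C).sub hfμ.restrict)
    · filter_upwards with z
      have := (abs_le.1 (hf z)).2
      simp only [Pi.zero_apply]; linarith
  have eμ1 : ∫ z in S, (f z + C) ∂μ = (∫ z in S, f z ∂μ) + C * (μ S).toReal := by
    rw [integral_add hfμ.restrict (integrable_const C), integral_const]
    simp [Measure.restrict_apply_univ, mul_comm, Measure.real]
  have eν1 : ∫ z in S, (f z + C) ∂ν = (∫ z in S, f z ∂ν) + C * (ν S).toReal := by
    rw [integral_add hfν.restrict (integrable_const C), integral_const]
    simp [Measure.restrict_apply_univ, mul_comm, Measure.real]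
  have eμ2 : ∫ z in S, (C - f z) ∂μ = C * (μ S).toReal - ∫ z in S, f z ∂μ := by
    rw [integral_sub (integrable_const C) hfμ.restrict, integral_const]
    simp [Measure.restrict_apply_univ, mul_comm, Measure.real]
  have eν2 : ∫ z in S, (C - f z) ∂ν = C * (ν S).toReal - ∫ z in S, f z ∂ν := by
    rw [integral_sub (integrable_const C) hfν.restrict, integral_const]
    simp [Measure.restrict_apply_univ, mul_comm, Measure.real]
  rw [eμ1, eν1] at h1
  rw [eμ2, eν2] at h2
  rw [abs_le]
  constructor <;> linarith

/-- If `sup_z k(z,z) ≤ ν` (kernel modeled via a feature map `φ`, `k z w = ⟪φ z, φ w⟫`,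
evaluation `h(z) = ⟪h, φ z⟫`), then for any probability measures `P, Q`,
`γ_k(P,Q) ≤ 2√ν · d_TV(P,Q)`, where `d_TV(P,Q) = sup_A |P(A) − Q(A)|`. -/
theorem stmt_5 {Z H : Type*} [MeasurableSpace Z]
    [NormedAddCommGroup H] [InnerProductSpace ℝ H]
    (φ : Z → H) (ν : ℝ) (hν : 0 < ν) (hk : ∀ z, ⟪φ z, φ z⟫ ≤ ν)
    (P Q : Measure Z) [IsProbabilityMeasure P] [IsProbabilityMeasure Q]
    (hIntP : ∀ h : H, Integrable (fun z => ⟪h, φ z⟫) P)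
    (hIntQ : ∀ h : H, Integrable (fun z => ⟪h, φ z⟫) Q) :
    (⨆ h : {h : H // ‖h‖ ≤ 1}, |(∫ z, ⟪h.1, φ z⟫ ∂P) - ∫ z, ⟪h.1, φ z⟫ ∂Q|)
      ≤ 2 * Real.sqrt ν *
        ⨆ A : {A : Set Z // MeasurableSet A}, |(P A.1).toReal - (Q A.1).toReal| := by
  set C := Real.sqrt ν with hCdef
  have hC : 0 ≤ C := Real.sqrt_nonneg ν
  -- Hahn decomposition for P, Q
  obtain ⟨S, hSm, hS1, hS2⟩ := hahn_decomposition (μ := P) (ν := Q)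
  have hleS : Q.restrict S ≤ P.restrict S := by
    rw [Measure.le_iff]
    intro t ht
    rw [Measure.restrict_apply ht, Measure.restrict_apply ht]
    exact hS1 _ (ht.inter hSm) Set.inter_subset_right
  have hleSc : P.restrict Sᶜ ≤ Q.restrict Sᶜ := by
    rw [Measure.le_iff]
    intro t ht
    rw [Measure.restrict_apply ht, Measure.restrict_apply ht]
    exact hS2 _ (ht.inter hSm.compl) Set.inter_subset_right
  -- the TV sup and its properties
  have hbdd : BddAbove (Set.range fun A : {A : Set Z // MeasurableSet A} =>
      |(P A.1).toReal - (Q A.1).toReal|) := by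
    refine ⟨2, ?_⟩
    rintro x ⟨A, rfl⟩
    have hP : (P A.1).toReal ≤ 1 := by
      have := prob_le_one (μ := P) (s := A.1)
      simpa using ENNReal.toReal_le_of_le_ofReal one_pos.le (by simpa)
    have hQ : (Q A.1).toReal ≤ 1 := by
      have := prob_le_one (μ := Q) (s := A.1)
      simpa using ENNReal.toReal_le_of_le_ofReal one_pos.le (by simpa)
    have hP0 : 0 ≤ (P A.1).toReal := ENNReal.toReal_nonneg
    have hQ0 : 0 ≤ (Q A.1).toReal := ENNReal.toReal_nonneg
    calc |(P A.1).toReal - (Q A.1).toReal| ≤ 1 := by rw [abs_le]; constructor <;> linarith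
    _ ≤ 2 := by norm_num
  have hsupS : ((P S).toReal - (Q S).toReal) ≤
      ⨆ A : {A : Set Z // MeasurableSet A}, |(P A.1).toReal - (Q A.1).toReal| :=
    le_trans (le_abs_self _) (le_ciSup hbdd ⟨S, hSm⟩)
  have hsupSc : ((Q Sᶜ).toReal - (P Sᶜ).toReal) ≤
      ⨆ A : {A : Set Z // MeasurableSet A}, |(P A.1).toReal - (Q A.1).toReal| := by
    refine le_trans ?_ (le_ciSup hbdd ⟨Sᶜ, hSm.compl⟩)
    rw [abs_sub_comm]
    exact le_abs_self _
  haveI : Nonempty {h : H // ‖h‖ ≤ 1} := ⟨⟨0, by simp⟩⟩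
  apply ciSup_le
  intro h
  set f : Z → ℝ := fun z => ⟪h.1, φ z⟫ with hfdef
  have hfb : ∀ z, |f z| ≤ C := by
    intro z
    have h1 : |f z| ≤ ‖h.1‖ * ‖φ z‖ := abs_real_inner_le_norm _ _
    have h2 : ‖φ z‖ ≤ C := by
      rw [hCdef]
      have hkz := hk z
      rw [real_inner_self_eq_norm_sq] at hkz
      exact (Real.le_sqrt (norm_nonneg _) hν.le).2 hkz
    calc |f z| ≤ ‖h.1‖ * ‖φ z‖ := h1
      _ ≤ 1 * C := mul_le_mul h.2 h2 (norm_nonneg _) zero_le_one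
      _ = C := one_mul C
  have hP := hIntP h.1
  have hQ := hIntQ h.1
  have hsplitP : ∫ z, f z ∂P = (∫ z in S, f z ∂P) + ∫ z in Sᶜ, f z ∂P :=
    (integral_add_compl hSm hP).symm
  have hsplitQ : ∫ z, f z ∂Q = (∫ z in S, f z ∂Q) + ∫ z in Sᶜ, f z ∂Q :=
    (integral_add_compl hSm hQ).symm
  have hA := aux_set_integral_diff P Q S hSm hleS f C hfb hP hQ
  have hB := aux_set_integral_diff Q P Sᶜ hSm.compl hleSc f C hfb hQ hP
  calc |(∫ z, f z ∂P) - ∫ z, f z ∂Q|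
      = |((∫ z in S, f z ∂P) - ∫ z in S, f z ∂Q) +
          ((∫ z in Sᶜ, f z ∂P) - ∫ z in Sᶜ, f z ∂Q)| := by
        rw [hsplitP, hsplitQ]; ring_nf
    _ ≤ |(∫ z in S, f z ∂P) - ∫ z in S, f z ∂Q| +
          |(∫ z in Sᶜ, f z ∂P) - ∫ z in Sᶜ, f z ∂Q| := abs_add_le _ _
    _ ≤ C * ((P S).toReal - (Q S).toReal) + C * ((Q Sᶜ).toReal - (P Sᶜ).toReal) := by
        refine add_le_add hA ?_
        rw [abs_sub_comm]
        exact hB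
    _ ≤ C * (⨆ A : {A : Set Z // MeasurableSet A}, |(P A.1).toReal - (Q A.1).toReal|)
        + C * (⨆ A : {A : Set Z // MeasurableSet A}, |(P A.1).toReal - (Q A.1).toReal|) :=
        add_le_add (mul_le_mul_of_nonneg_left hsupS hC) (mul_le_mul_of_nonneg_left hsupSc hC)
    _ = 2 * C * ⨆ A : {A : Set Z // MeasurableSet A}, |(P A.1).toReal - (Q A.1).toReal| := by
        ring
end

section
/- (Unbiased case) Suppose Y ⟂ S, so p_{0|0} = p_{0|1} =: p. Then the MMD between the group-conditional representations equals the kernel-based equalized-odds statistic: γ_k(Z_0, Z_1) = ‖p(μ_0^0 − μ_1^0) + (1−p)(μ_0^1 − μ_1^1)‖_H = EO_k(Z, Y, S), and hence sup_{g ∈ G} DP(g) = (2√ν)^{-1} EO_k(Z, Y, S). -/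
open MeasureTheory
open scoped RealInnerProductSpace ENNReal

lemma sup_abs_inner_ball {H : Type*} [NormedAddCommGroup H] [InnerProductSpace ℝ H]
    (v : H) (c : ℝ) (hc : 0 ≤ c) :
    (⨆ h : {h : H // ‖h‖ ≤ c}, |⟪h.1, v⟫|) = c * ‖v‖ := by
  have hne : Nonempty {h : H // ‖h‖ ≤ c} := ⟨⟨0, by simpa using hc⟩⟩
  have hbdd : BddAbove (Set.range fun h : {h : H // ‖h‖ ≤ c} => |⟪h.1, v⟫|) := by
    refine ⟨c * ‖v‖, ?_⟩
    rintro x ⟨h, rfl⟩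
    calc |⟪h.1, v⟫| ≤ ‖h.1‖ * ‖v‖ := abs_real_inner_le_norm _ _
      _ ≤ c * ‖v‖ := by gcongr; exact h.2
  refine le_antisymm (ciSup_le fun h => ?_) ?_
  · calc |⟪h.1, v⟫| ≤ ‖h.1‖ * ‖v‖ := abs_real_inner_le_norm _ _
      _ ≤ c * ‖v‖ := by gcongr; exact h.2
  · rcases eq_or_ne v 0 with rfl | hv
    · simp
    · have hv' : (0:ℝ) < ‖v‖ := norm_pos_iff.mpr hv
      have hmem : ‖(c / ‖v‖) • v‖ ≤ c := by
        rw [norm_smul, Real.norm_eq_abs, abs_div, abs_of_nonneg hc, abs_of_pos hv',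
          div_mul_cancel₀ _ hv'.ne']
      have hval : |⟪((c / ‖v‖) • v : H), v⟫| = c * ‖v‖ := by
        rw [real_inner_smul_left, real_inner_self_eq_norm_sq]
        rw [abs_of_nonneg (by positivity)]
        field_simp
      calc c * ‖v‖ = |⟪((⟨(c / ‖v‖) • v, hmem⟩ : {h : H // ‖h‖ ≤ c}) : {h : H // ‖h‖ ≤ c}).1, v⟫| := hval.symm
        _ ≤ _ := le_ciSup hbdd _

/-- Unbiased case (`Y ⟂ S`, so `p_{0|0} = p_{0|1} = p`). With `Z_s^y ~ P_{s,y}` the conditional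
laws of the representation, `μ_s^y = ∫ φ dP_{s,y}` their kernel mean embeddings (RKHS modeled
via feature map `φ`, evaluation `h(z) = ⟪h, φ z⟫`, kernel bounded by `ν`), and
`Z_s ~ Q_s := p·P_{s,0} + (1−p)·P_{s,1}` the group-conditional laws, the MMD
`γ_k(Z_0, Z_1)` equals `‖p(μ₀⁰ − μ₁⁰) + (1−p)(μ₀¹ − μ₁¹)‖ = EO_k(Z,Y,S)`, and
`sup_{g ∈ G} DP(g) = (2√ν)⁻¹ EO_k(Z,Y,S)` over `G = {(h+1)/2 : ‖h‖ ≤ ν^{-1/2}}`. -/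
theorem stmt_8 {Z H : Type*} [MeasurableSpace Z]
    [NormedAddCommGroup H] [InnerProductSpace ℝ H] [CompleteSpace H]
    (φ : Z → H) (ν : ℝ) (hν : 0 < ν) (hk : ∀ z, ⟪φ z, φ z⟫ ≤ ν)
    (P00 P01 P10 P11 : Measure Z)
    [IsProbabilityMeasure P00] [IsProbabilityMeasure P01]
    [IsProbabilityMeasure P10] [IsProbabilityMeasure P11]
    (hφ00 : Integrable φ P00) (hφ01 : Integrable φ P01)
    (hφ10 : Integrable φ P10) (hφ11 : Integrable φ P11)
    (p : ℝ) (hp : p ∈ Set.Icc (0 : ℝ) 1)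
    (Q0 Q1 : Measure Z)
    (hQ0 : Q0 = ENNReal.ofReal p • P00 + ENNReal.ofReal (1 - p) • P01)
    (hQ1 : Q1 = ENNReal.ofReal p • P10 + ENNReal.ofReal (1 - p) • P11)
    (EOk : ℝ)
    (hEO : EOk = ‖p • ((∫ z, φ z ∂P00) - ∫ z, φ z ∂P10)
        + (1 - p) • ((∫ z, φ z ∂P01) - ∫ z, φ z ∂P11)‖) :
    (⨆ h : {h : H // ‖h‖ ≤ 1}, |(∫ z, ⟪h.1, φ z⟫ ∂Q0) - ∫ z, ⟪h.1, φ z⟫ ∂Q1|) = EOk ∧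
    (⨆ h : {h : H // ‖h‖ ≤ (Real.sqrt ν)⁻¹},
        |(∫ z, (⟪h.1, φ z⟫ + 1) / 2 ∂Q1) - ∫ z, (⟪h.1, φ z⟫ + 1) / 2 ∂Q0|)
      = (2 * Real.sqrt ν)⁻¹ * EOk := by
  have hp0 : 0 ≤ p := hp.1
  have hp1 : 0 ≤ 1 - p := by linarith [hp.2]
  have hiQ0 : Integrable φ Q0 := by
    rw [hQ0]
    exact (hφ00.smul_measure ENNReal.ofReal_ne_top).add_measure
      (hφ01.smul_measure ENNReal.ofReal_ne_top)
  have hiQ1 : Integrable φ Q1 := by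
    rw [hQ1]
    exact (hφ10.smul_measure ENNReal.ofReal_ne_top).add_measure
      (hφ11.smul_measure ENNReal.ofReal_ne_top)
  have hμ0 : (∫ z, φ z ∂Q0) = p • (∫ z, φ z ∂P00) + (1 - p) • (∫ z, φ z ∂P01) := by
    rw [hQ0, integral_add_measure (hφ00.smul_measure ENNReal.ofReal_ne_top)
      (hφ01.smul_measure ENNReal.ofReal_ne_top), integral_smul_measure,
      integral_smul_measure, ENNReal.toReal_ofReal hp0, ENNReal.toReal_ofReal hp1]
  have hμ1 : (∫ z, φ z ∂Q1) = p • (∫ z, φ z ∂P10) + (1 - p) • (∫ z, φ z ∂P11) := by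
    rw [hQ1, integral_add_measure (hφ10.smul_measure ENNReal.ofReal_ne_top)
      (hφ11.smul_measure ENNReal.ofReal_ne_top), integral_smul_measure,
      integral_smul_measure, ENNReal.toReal_ofReal hp0, ENNReal.toReal_ofReal hp1]
  set d : H := p • ((∫ z, φ z ∂P00) - ∫ z, φ z ∂P10)
      + (1 - p) • ((∫ z, φ z ∂P01) - ∫ z, φ z ∂P11) with hd
  have hdiff : (∫ z, φ z ∂Q0) - (∫ z, φ z ∂Q1) = d := by
    rw [hμ0, hμ1, hd, smul_sub, smul_sub]; abel
  have hPQ0 : IsProbabilityMeasure Q0 := by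
    constructor
    rw [hQ0]
    simp [Measure.add_apply, ← ENNReal.ofReal_add hp0 hp1]
  have hPQ1 : IsProbabilityMeasure Q1 := by
    constructor
    rw [hQ1]
    simp [Measure.add_apply, ← ENNReal.ofReal_add hp0 hp1]
  have hinner0 : ∀ h : H, (∫ z, ⟪h, φ z⟫ ∂Q0) = ⟪h, ∫ z, φ z ∂Q0⟫ :=
    fun h => integral_inner hiQ0 h
  have hinner1 : ∀ h : H, (∫ z, ⟪h, φ z⟫ ∂Q1) = ⟪h, ∫ z, φ z ∂Q1⟫ :=
    fun h => integral_inner hiQ1 h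
  have key : ∀ h : H,
      (∫ z, ⟪h, φ z⟫ ∂Q0) - ∫ z, ⟪h, φ z⟫ ∂Q1 = ⟪h, d⟫ := by
    intro h
    rw [hinner0, hinner1, ← inner_sub_right, hdiff]
  constructor
  · rw [hEO]
    have := sup_abs_inner_ball d 1 zero_le_one
    rw [one_mul] at this
    rw [← this]
    congr 1
    ext h
    rw [key]
  · -- second part
    have haff : ∀ (μ : Measure Z) (_ : IsProbabilityMeasure μ) (_ : Integrable φ μ) (h : H),
        (∫ z, (⟪h, φ z⟫ + 1) / 2 ∂μ) = ((∫ z, ⟪h, φ z⟫ ∂μ) + 1) / 2 := by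
      intro μ hμ hint h
      have hι : Integrable (fun z => ⟪h, φ z⟫) μ := hint.const_inner h
      have : (fun z => (⟪h, φ z⟫ + 1) / 2) = fun z => ⟪h, φ z⟫ / 2 + 1 / 2 := by
        funext z; ring
      rw [this, integral_add (hι.div_const 2) (integrable_const _), integral_div,
        integral_const, probReal_univ, one_smul]
      ring
    have hfun : ∀ h : H,
        |(∫ z, (⟪h, φ z⟫ + 1) / 2 ∂Q1) - ∫ z, (⟪h, φ z⟫ + 1) / 2 ∂Q0|
          = |⟪h, (2:ℝ)⁻¹ • d⟫| := by
      intro h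
      rw [haff Q1 hPQ1 hiQ1, haff Q0 hPQ0 hiQ0, real_inner_smul_right]
      rw [show ((∫ z, ⟪h, φ z⟫ ∂Q1) + 1) / 2 - ((∫ z, ⟪h, φ z⟫ ∂Q0) + 1) / 2
          = -(2⁻¹ * ((∫ z, ⟪h, φ z⟫ ∂Q0) - ∫ z, ⟪h, φ z⟫ ∂Q1)) by ring, key, abs_neg]
    have hc : (0:ℝ) ≤ (Real.sqrt ν)⁻¹ := by positivity
    have := sup_abs_inner_ball ((2:ℝ)⁻¹ • d) ((Real.sqrt ν)⁻¹) hc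
    calc (⨆ h : {h : H // ‖h‖ ≤ (Real.sqrt ν)⁻¹},
        |(∫ z, (⟪h.1, φ z⟫ + 1) / 2 ∂Q1) - ∫ z, (⟪h.1, φ z⟫ + 1) / 2 ∂Q0|)
        = ⨆ h : {h : H // ‖h‖ ≤ (Real.sqrt ν)⁻¹}, |⟪h.1, (2:ℝ)⁻¹ • d⟫| := by
          congr 1; ext h; exact hfun h.1
      _ = (Real.sqrt ν)⁻¹ * ‖(2:ℝ)⁻¹ • d‖ := this
      _ = (2 * Real.sqrt ν)⁻¹ * EOk := by
          rw [hEO, norm_smul]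
          simp [mul_inv]
          ring
end

section
/- (Biased case) If Y is not independent of S, then sup_{g ∈ G} DP(g; Z, Y, S) ≥ (2√ν)^{-1} | |p_{0|0} − p_{0|1}| · γ_k(Z_1^0, Z_1^1) − EO_k(Z, Y, S) |. -/
open MeasureTheory
open scoped RealInnerProductSpace ENNReal

/-- Biased case (`Y` not independent of `S`, i.e. `p_{0|0} ≠ p_{0|1}`). With `Z_s^y ~ P_{s,y}`,
kernel mean embeddings `μ_s^y = ∫ φ dP_{s,y}`, group-conditional laws
`Q_s = p_{0|s}·P_{s,0} + (1−p_{0|s})·P_{s,1}`,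
`EO_k = ‖p_{0|0}(μ₀⁰−μ₁⁰) + p_{1|0}(μ₀¹−μ₁¹)‖` and `γ_k(Z₁⁰,Z₁¹) = ‖μ₁⁰ − μ₁¹‖`:
`sup_{g ∈ G} DP(g) ≥ (2√ν)⁻¹ | |p_{0|0} − p_{0|1}| · γ_k(Z₁⁰,Z₁¹) − EO_k |`. -/
theorem stmt_9 {Z H : Type*} [MeasurableSpace Z]
    [NormedAddCommGroup H] [InnerProductSpace ℝ H] [CompleteSpace H]
    (φ : Z → H) (ν : ℝ) (hν : 0 < ν) (hk : ∀ z, ⟪φ z, φ z⟫ ≤ ν)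
    (P00 P01 P10 P11 : Measure Z)
    [IsProbabilityMeasure P00] [IsProbabilityMeasure P01]
    [IsProbabilityMeasure P10] [IsProbabilityMeasure P11]
    (hφ00 : Integrable φ P00) (hφ01 : Integrable φ P01)
    (hφ10 : Integrable φ P10) (hφ11 : Integrable φ P11)
    (p00 p01 : ℝ) (hp00 : p00 ∈ Set.Icc (0 : ℝ) 1) (hp01 : p01 ∈ Set.Icc (0 : ℝ) 1)
    (hbias : p00 ≠ p01)
    (Q0 Q1 : Measure Z)
    (hQ0 : Q0 = ENNReal.ofReal p00 • P00 + ENNReal.ofReal (1 - p00) • P01)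
    (hQ1 : Q1 = ENNReal.ofReal p01 • P10 + ENNReal.ofReal (1 - p01) • P11)
    (EOk : ℝ)
    (hEO : EOk = ‖p00 • ((∫ z, φ z ∂P00) - ∫ z, φ z ∂P10)
        + (1 - p00) • ((∫ z, φ z ∂P01) - ∫ z, φ z ∂P11)‖) :
    (⨆ h : {h : H // ‖h‖ ≤ (Real.sqrt ν)⁻¹},
        |(∫ z, (⟪h.1, φ z⟫ + 1) / 2 ∂Q1) - ∫ z, (⟪h.1, φ z⟫ + 1) / 2 ∂Q0|)
      ≥ (2 * Real.sqrt ν)⁻¹ *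
          |(|p00 - p01|) * ‖(∫ z, φ z ∂P10) - ∫ z, φ z ∂P11‖ - EOk| := by
  obtain ⟨hp00a, hp00b⟩ := hp00
  obtain ⟨hp01a, hp01b⟩ := hp01
  have hsν : 0 < Real.sqrt ν := Real.sqrt_pos.mpr hν
  set a := ∫ z, φ z ∂P00 with ha
  set b := ∫ z, φ z ∂P01 with hb
  set c := ∫ z, φ z ∂P10 with hc
  set d := ∫ z, φ z ∂P11 with hd
  set D : H := (p00 • a + (1 - p00) • b) - (p01 • c + (1 - p01) • d) with hDdef
  -- step 1: compute the integrals
  have key : ∀ (p : ℝ), 0 ≤ p → p ≤ 1 → ∀ (P P' : Measure Z),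
      IsProbabilityMeasure P → IsProbabilityMeasure P' →
      Integrable φ P → Integrable φ P' → ∀ h : H,
      ∫ z, (⟪h, φ z⟫ + 1) / 2 ∂(ENNReal.ofReal p • P + ENNReal.ofReal (1 - p) • P')
        = (⟪h, p • (∫ z, φ z ∂P) + (1 - p) • (∫ z, φ z ∂P')⟫ + 1) / 2 := by
    intro p hp0 hp1 P P' hP hP' hφP hφP' h
    have hint : ∀ (μ : Measure Z), IsProbabilityMeasure μ → Integrable φ μ →
        Integrable (fun z => (⟪h, φ z⟫ + 1) / 2) μ ∧
        ∫ z, (⟪h, φ z⟫ + 1) / 2 ∂μ = (⟪h, ∫ z, φ z ∂μ⟫ + 1) / 2 := by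
      intro μ hμ hφμ
      have h1 : Integrable (fun z => ⟪h, φ z⟫) μ := hφμ.const_inner h
      have h2 : Integrable (fun z => (⟪h, φ z⟫ + 1) / 2) μ :=
        ((h1.add (integrable_const 1)).div_const 2)
      refine ⟨h2, ?_⟩
      rw [integral_div, integral_add h1 (integrable_const 1), integral_inner hφμ,
        integral_const]
      simp [hμ.measure_univ]
    obtain ⟨hi1, he1⟩ := hint P hP hφP
    obtain ⟨hi2, he2⟩ := hint P' hP' hφP'
    rw [integral_add_measure (hi1.smul_measure ENNReal.ofReal_ne_top)
        (hi2.smul_measure ENNReal.ofReal_ne_top),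
      integral_smul_measure, integral_smul_measure,
      ENNReal.toReal_ofReal hp0, ENNReal.toReal_ofReal (by linarith), he1, he2,
      inner_add_right, real_inner_smul_right, real_inner_smul_right]
    simp only [smul_eq_mul]
    ring
  have hval : ∀ h : {h : H // ‖h‖ ≤ (Real.sqrt ν)⁻¹},
      |(∫ z, (⟪h.1, φ z⟫ + 1) / 2 ∂Q1) - ∫ z, (⟪h.1, φ z⟫ + 1) / 2 ∂Q0|
        = |⟪h.1, D⟫| / 2 := by
    intro h
    rw [hQ0, hQ1, key p01 hp01a hp01b P10 P11 ‹_› ‹_› hφ10 hφ11 h.1,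
      key p00 hp00a hp00b P00 P01 ‹_› ‹_› hφ00 hφ01 h.1]
    rw [div_sub_div_same, show ∀ x y : ℝ, (x + 1) - (y + 1) = -(y - x) by intro x y; ring,
      abs_div, abs_neg]
    congr 2
    rw [hDdef, inner_sub_right]
    norm_num
  -- bounded above
  have hbdd : BddAbove (Set.range fun h : {h : H // ‖h‖ ≤ (Real.sqrt ν)⁻¹} =>
      |(∫ z, (⟪h.1, φ z⟫ + 1) / 2 ∂Q1) - ∫ z, (⟪h.1, φ z⟫ + 1) / 2 ∂Q0|) := by
    refine ⟨(Real.sqrt ν)⁻¹ * ‖D‖ / 2, ?_⟩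
    rintro x ⟨h, rfl⟩
    dsimp only
    rw [hval h]
    have := abs_real_inner_le_norm h.1 D
    have hh := h.2
    have : |⟪h.1, D⟫| ≤ (Real.sqrt ν)⁻¹ * ‖D‖ :=
      this.trans (mul_le_mul_of_nonneg_right hh (norm_nonneg D))
    linarith
  -- reduce to ‖D‖ bound
  have hRHS : |(|p00 - p01|) * ‖c - d‖ - EOk| ≤ ‖D‖ := by
    have hid : D = ((p00 - p01) • (c - d)) - (-(p00 • (a - c) + (1 - p00) • (b - d))) := by
      rw [hDdef]
      module
    calc |(|p00 - p01|) * ‖c - d‖ - EOk|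
        = |‖(p00 - p01) • (c - d)‖ - ‖-(p00 • (a - c) + (1 - p00) • (b - d))‖| := by
          rw [hEO, norm_smul, norm_neg, Real.norm_eq_abs]
      _ ≤ ‖((p00 - p01) • (c - d)) - (-(p00 • (a - c) + (1 - p00) • (b - d)))‖ :=
          abs_norm_sub_norm_le _ _
      _ = ‖D‖ := by rw [← hid]
  have hmain : (2 * Real.sqrt ν)⁻¹ * ‖D‖ ≤
      ⨆ h : {h : H // ‖h‖ ≤ (Real.sqrt ν)⁻¹},
        |(∫ z, (⟪h.1, φ z⟫ + 1) / 2 ∂Q1) - ∫ z, (⟪h.1, φ z⟫ + 1) / 2 ∂Q0| := by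
    by_cases hD : D = 0
    · have hz : ‖(0:H)‖ ≤ (Real.sqrt ν)⁻¹ := by
        simpa using inv_nonneg.mpr (Real.sqrt_nonneg ν)
      calc (2 * Real.sqrt ν)⁻¹ * ‖D‖ = 0 := by rw [hD]; simp
        _ ≤ _ := by
            refine le_trans ?_ (le_ciSup hbdd ⟨0, hz⟩)
            rw [hval]
            simp
    · set h0 : H := ((Real.sqrt ν)⁻¹ * ‖D‖⁻¹) • D with hh0
      have hn : ‖h0‖ = (Real.sqrt ν)⁻¹ := by
        rw [hh0, norm_smul, Real.norm_eq_abs, abs_of_nonneg (by positivity),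
          mul_assoc, inv_mul_cancel₀ (norm_ne_zero_iff.mpr hD)]
        ring
      refine le_trans ?_ (le_ciSup hbdd ⟨h0, hn.le⟩)
      rw [hval]
      have : ⟪h0, D⟫ = (Real.sqrt ν)⁻¹ * ‖D‖ := by
        have hDn : ‖D‖ ≠ 0 := norm_ne_zero_iff.mpr hD
        rw [hh0, real_inner_smul_left, real_inner_self_eq_norm_sq]
        field_simp
      rw [this, abs_of_nonneg (by positivity), mul_inv]
      exact le_of_eq (by ring)
  refine le_trans ?_ hmain
  have h2 : (0:ℝ) ≤ (2 * Real.sqrt ν)⁻¹ := by positivity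
  exact mul_le_mul_of_nonneg_left hRHS h2
end

section
/- (Calibration lower-bounds DP) Under the assumptions that sup k ≤ ν, sup k_{[0,1]} ≤ ν₁, sup k_{{0,1}} ≤ ν₂, ‖1‖ in the two-point RKHS equals 1, and the identity map id ∈ H_{[0,1]}: for every h in the classifier class G, DC(h,Y,S) ≥ (4√(ν₁ν₂))^{-1} γ_{k₁⊗k₂}((Y,h(Z))|S=0, (Y,h(Z))|S=1), and sup_{h∈G} γ_{k₁⊗k₂}((Y,h(Z))|S=0,(Y,h(Z))|S=1) ≥ ‖id‖_{H_{[0,1]}}^{-1} sup_{h∈G} DP(h; Z,Y,S). -/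
open MeasureTheory Set
open scoped RealInnerProductSpace

section TVhelper


/-- TV bound on integral differences, via layer cake. -/
lemma abs_integral_sub_le_tv {α : Type*} [MeasurableSpace α]
    (μ ν : Measure α) [IsProbabilityMeasure μ] [IsProbabilityMeasure ν]
    {g : α → ℝ} (hgm : Measurable g) {C : ℝ}
    (hμ : ∀ᵐ x ∂μ, |g x| ≤ C) (hν : ∀ᵐ x ∂ν, |g x| ≤ C) {tv : ℝ}
    (htv : ∀ A : Set α, MeasurableSet A → |(μ A).toReal - (ν A).toReal| ≤ tv) :
    |(∫ x, g x ∂μ) - ∫ x, g x ∂ν| ≤ 2 * C * tv := by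
  have hC : 0 ≤ C := by
    rcases hμ.exists with ⟨x, hx⟩; exact le_trans (abs_nonneg _) hx
  have htv0 : 0 ≤ tv := le_trans (by simp) (htv ∅ MeasurableSet.empty)
  set f : α → ℝ := fun x => g x + C with hf
  have hfm : Measurable f := hgm.add_const C
  have hgint : ∀ (ρ : Measure α) [IsProbabilityMeasure ρ], (∀ᵐ x ∂ρ, |g x| ≤ C) →
      Integrable g ρ := by
    intro ρ _ hρ
    refine Integrable.mono' (integrable_const C) hgm.aestronglyMeasurable ?_
    filter_upwards [hρ] with x hx using by simpa [Real.norm_eq_abs] using hx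
  have hfint : ∀ (ρ : Measure α) [IsProbabilityMeasure ρ], (∀ᵐ x ∂ρ, |g x| ≤ C) →
      Integrable f ρ := fun ρ _ hρ => (hgint ρ hρ).add (integrable_const C)
  have key : ∀ (ρ : Measure α) [IsProbabilityMeasure ρ], (∀ᵐ x ∂ρ, |g x| ≤ C) →
      ∫ x, f x ∂ρ = ∫ t in Ioc 0 (2*C), (ρ {a | t ≤ f a}).toReal := by
    intro ρ _ hρ
    refine (hfint ρ hρ).integral_eq_integral_Ioc_meas_le ?_ ?_
    · filter_upwards [hρ] with x hx
      have := neg_le_of_abs_le hx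
      simp only [hf, Pi.zero_apply]; linarith
    · filter_upwards [hρ] with x hx
      have := le_of_abs_le hx
      simp only [hf]; linarith
  -- measurability and integrability of level-set measures
  have Fmble : ∀ (ρ : Measure α), Measurable fun t : ℝ => (ρ {a | t ≤ f a}).toReal := by
    intro ρ
    have hanti : Antitone fun t : ℝ => ρ {a | t ≤ f a} :=
      fun s t hst => measure_mono fun a ha => le_trans hst ha
    exact hanti.measurable.ennreal_toReal
  have Fint : ∀ (ρ : Measure α) [IsProbabilityMeasure ρ],
      IntegrableOn (fun t : ℝ => (ρ {a | t ≤ f a}).toReal) (Ioc 0 (2*C)) := by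
    intro ρ _
    have hc : IntegrableOn (fun _ : ℝ => (1:ℝ)) (Ioc 0 (2*C)) volume :=
      integrableOn_const measure_Ioc_lt_top.ne
    refine Integrable.mono' hc (Fmble ρ).aestronglyMeasurable ?_
    refine Filter.Eventually.of_forall fun t => ?_
    rw [Real.norm_eq_abs, abs_of_nonneg ENNReal.toReal_nonneg]
    calc (ρ {a | t ≤ f a}).toReal ≤ (ρ Set.univ).toReal :=
          ENNReal.toReal_mono (measure_ne_top _ _) (measure_mono (subset_univ _))
      _ = 1 := by simp
  have hdiff : (∫ x, g x ∂μ) - ∫ x, g x ∂ν = (∫ x, f x ∂μ) - ∫ x, f x ∂ν := by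
    have h1 : ∫ x, f x ∂μ = (∫ x, g x ∂μ) + C := by
      rw [hf, integral_add (hgint μ hμ) (integrable_const C)]; simp
    have h2 : ∫ x, f x ∂ν = (∫ x, g x ∂ν) + C := by
      rw [hf, integral_add (hgint ν hν) (integrable_const C)]; simp
    rw [h1, h2]; ring
  rw [hdiff, key μ hμ, key ν hν, ← integral_sub (Fint μ) (Fint ν)]
  calc |∫ t in Ioc 0 (2*C), ((μ {a | t ≤ f a}).toReal - (ν {a | t ≤ f a}).toReal)|
      ≤ ∫ _ in Ioc 0 (2*C), tv := by
        rw [← Real.norm_eq_abs]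
        refine norm_integral_le_of_norm_le (integrable_const tv) ?_
        refine Filter.Eventually.of_forall fun t => ?_
        rw [Real.norm_eq_abs]
        exact htv _ (hfm measurableSet_Ici)
    _ ≤ 2 * C * tv := by
        rw [setIntegral_const, smul_eq_mul, measureReal_def, Real.volume_Ioc]
        have : (ENNReal.ofReal (2*C - 0)).toReal = 2*C := by
          rw [ENNReal.toReal_ofReal (by linarith)]; ring
        rw [this]


end TVhelper

section

variable {Z H H12 : Type*} [MeasurableSpace Z]
  [NormedAddCommGroup H] [InnerProductSpace ℝ H]
  [NormedAddCommGroup H12] [InnerProductSpace ℝ H12]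

/-- The classifier in `G` associated to `h` in the scaled RKHS ball: `g = (h+1)/2`. -/
noncomputable def clf (φ : Z → H) (h : H) (z : Z) : ℝ := (⟪h, φ z⟫ + 1) / 2

/-- Joint law of `(Y, g(Z))` under the joint law `Q` of `(Z, Y)`. -/
noncomputable def jointLaw (φ : Z → H) (h : H) (Q : Measure (Z × Bool)) :
    Measure (Bool × ℝ) :=
  Q.map fun zy => (zy.2, clf φ h zy.1)

/-- MMD (with the tensor-product kernel, modeled by a feature map `ψ` on `{0,1} × [0,1]`)
between the joint laws of `(Y, h(Z))` given `S = 0` and `S = 1`. -/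
noncomputable def gammaTensor (φ : Z → H) (ψ : Bool × ℝ → H12) (h : H)
    (Q0 Q1 : Measure (Z × Bool)) : ℝ :=
  ⨆ f : {f : H12 // ‖f‖ ≤ 1},
    |(∫ x, ⟪f.1, ψ x⟫ ∂(jointLaw φ h Q0)) - ∫ x, ⟪f.1, ψ x⟫ ∂(jointLaw φ h Q1)|

/-- Total variation distance between the joint laws of `(Y, h(Z))` given `S = 0`, `S = 1`. -/
noncomputable def tvJoint (φ : Z → H) (h : H) (Q0 Q1 : Measure (Z × Bool)) : ℝ :=
  ⨆ A : {A : Set (Bool × ℝ) // MeasurableSet A},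
    |((jointLaw φ h Q0) A.1).toReal - ((jointLaw φ h Q1) A.1).toReal|

/-- Demographic parity violation of `g = (h+1)/2` between the group-conditional laws of `Z`. -/
noncomputable def DPv (φ : Z → H) (h : H) (Q0 Q1 : Measure (Z × Bool)) : ℝ :=
  |(∫ z, clf φ h z ∂(Q1.map Prod.fst)) - ∫ z, clf φ h z ∂(Q0.map Prod.fst)|

/-- Calibration lower-bounds DP. With kernel `k` on `Z` bounded by `ν` (feature map `φ`),
tensor-product kernel on `{0,1} × [0,1]` bounded by `ν₁ν₂` (feature map `ψ`), the RKHS norm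
of the constant `1` on `{0,1}` equal to `1` and `id ∈ H_{[0,1]}` — encoded by an element
`fId` of the tensor RKHS with `⟪fId, ψ(y,u)⟫ = u` and `‖fId‖ = ‖id‖·‖1‖ = normId` — we have,
for every classifier `h` in `G`:
`DC(h,Y,S) = (1/2) d_TV ≥ (4√(ν₁ν₂))⁻¹ γ_{k₁⊗k₂}((Y,h(Z))|S=0, (Y,h(Z))|S=1)`, and
`sup_{h∈G} γ_{k₁⊗k₂} ≥ ‖id‖⁻¹ sup_{h∈G} DP(h; Z,Y,S)`. -/
theorem stmt_16 (φ : Z → H) (ψ : Bool × ℝ → H12)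
    (ν ν₁ ν₂ : ℝ) (hν : 0 < ν) (hν₁ : 0 < ν₁) (hν₂ : 0 < ν₂)
    (hk : ∀ z, ⟪φ z, φ z⟫ ≤ ν)
    (hk12 : ∀ x : Bool × ℝ, x.2 ∈ Set.Icc (0 : ℝ) 1 → ⟪ψ x, ψ x⟫ ≤ ν₁ * ν₂)
    (hφm : ∀ h : H, Measurable fun z => ⟪h, φ z⟫)
    (hψm : ∀ f : H12, Measurable fun x : Bool × ℝ => ⟪f, ψ x⟫)
    (Q0 Q1 : Measure (Z × Bool)) [IsProbabilityMeasure Q0] [IsProbabilityMeasure Q1]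
    (fId : H12) (normId : ℝ) (hnormId : 0 < normId) (hfIdnorm : ‖fId‖ = normId)
    (hfId : ∀ (y : Bool) (u : ℝ), u ∈ Set.Icc (0 : ℝ) 1 → ⟪fId, ψ (y, u)⟫ = u) :
    (∀ h : H, ‖h‖ ≤ (Real.sqrt ν)⁻¹ →
        (4 * Real.sqrt (ν₁ * ν₂))⁻¹ * gammaTensor φ ψ h Q0 Q1
          ≤ (1 / 2) * tvJoint φ h Q0 Q1) ∧
    (⨆ h : {h : H // ‖h‖ ≤ (Real.sqrt ν)⁻¹}, gammaTensor φ ψ h.1 Q0 Q1)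
      ≥ normId⁻¹ * ⨆ h : {h : H // ‖h‖ ≤ (Real.sqrt ν)⁻¹}, DPv φ h.1 Q0 Q1 := by
  have hsν : 0 < Real.sqrt ν := Real.sqrt_pos.2 hν
  set sq := Real.sqrt (ν₁ * ν₂) with hsqdef
  have hsq0 : 0 < sq := Real.sqrt_pos.2 (mul_pos hν₁ hν₂)
  have hφb : ∀ z, ‖φ z‖ ≤ Real.sqrt ν := by
    intro z
    have h2 : ‖φ z‖ ^ 2 ≤ ν := by rw [← real_inner_self_eq_norm_sq]; exact hk z
    calc ‖φ z‖ = Real.sqrt (‖φ z‖ ^ 2) := (Real.sqrt_sq (norm_nonneg _)).symm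
      _ ≤ Real.sqrt ν := Real.sqrt_le_sqrt h2
  have hψb : ∀ x : Bool × ℝ, x.2 ∈ Set.Icc (0 : ℝ) 1 → ‖ψ x‖ ≤ sq := by
    intro x hx
    have h2 : ‖ψ x‖ ^ 2 ≤ ν₁ * ν₂ := by rw [← real_inner_self_eq_norm_sq]; exact hk12 x hx
    calc ‖ψ x‖ = Real.sqrt (‖ψ x‖ ^ 2) := (Real.sqrt_sq (norm_nonneg _)).symm
      _ ≤ sq := Real.sqrt_le_sqrt h2
  have hclfm : ∀ h : H, Measurable (clf φ h) := fun h =>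
    ((hφm h).add_const 1).div_const 2
  have hmm : ∀ h : H, Measurable (fun zy : Z × Bool => ((zy.2, clf φ h zy.1) : Bool × ℝ)) :=
    fun h => measurable_snd.prodMk ((hclfm h).comp measurable_fst)
  have hclf01 : ∀ h : H, ‖h‖ ≤ (Real.sqrt ν)⁻¹ → ∀ z, clf φ h z ∈ Set.Icc (0 : ℝ) 1 := by
    intro h hh z
    have h1 : |⟪h, φ z⟫| ≤ 1 := by
      calc |⟪h, φ z⟫| ≤ ‖h‖ * ‖φ z‖ := abs_real_inner_le_norm _ _
        _ ≤ (Real.sqrt ν)⁻¹ * Real.sqrt ν :=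
            mul_le_mul hh (hφb z) (norm_nonneg _) (by positivity)
        _ = 1 := inv_mul_cancel₀ hsν.ne'
    rcases abs_le.1 h1 with ⟨h1l, h1r⟩
    constructor <;> simp only [clf] <;> linarith
  have hprob : ∀ (h : H) (Q : Measure (Z × Bool)) [IsProbabilityMeasure Q],
      IsProbabilityMeasure (jointLaw φ h Q) := fun h Q _ =>
    Measure.isProbabilityMeasure_map (hmm h).aemeasurable
  have hae : ∀ (h : H), ‖h‖ ≤ (Real.sqrt ν)⁻¹ →
      ∀ (Q : Measure (Z × Bool)) [IsProbabilityMeasure Q],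
      ∀ᵐ x ∂(jointLaw φ h Q), x.2 ∈ Set.Icc (0 : ℝ) 1 := by
    intro h hh Q _
    rw [jointLaw, ae_map_iff (hmm h).aemeasurable (measurable_snd measurableSet_Icc)]
    exact Filter.Eventually.of_forall fun zy => hclf01 h hh zy.1
  -- ae bound on inner products against ψ
  have haeb : ∀ (h : H), ‖h‖ ≤ (Real.sqrt ν)⁻¹ →
      ∀ (Q : Measure (Z × Bool)) [IsProbabilityMeasure Q],
      ∀ (f : H12), ‖f‖ ≤ 1 → ∀ᵐ x ∂(jointLaw φ h Q), |⟪f, ψ x⟫| ≤ sq := by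
    intro h hh Q _ f hf
    filter_upwards [hae h hh Q] with x hx
    calc |⟪f, ψ x⟫| ≤ ‖f‖ * ‖ψ x‖ := abs_real_inner_le_norm _ _
      _ ≤ 1 * sq := mul_le_mul hf (hψb x hx) (norm_nonneg _) zero_le_one
      _ = sq := one_mul sq
  -- per-f bound on gammaTensor terms
  have gterm : ∀ (h : H), ‖h‖ ≤ (Real.sqrt ν)⁻¹ → ∀ (f : H12), ‖f‖ ≤ 1 →
      |(∫ x, ⟪f, ψ x⟫ ∂(jointLaw φ h Q0)) - ∫ x, ⟪f, ψ x⟫ ∂(jointLaw φ h Q1)| ≤ 2 * sq := by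
    intro h hh f hf
    haveI := hprob h Q0; haveI := hprob h Q1
    have hb : ∀ (Q : Measure (Z × Bool)) [IsProbabilityMeasure Q],
        (∀ᵐ x ∂(jointLaw φ h Q), |⟪f, ψ x⟫| ≤ sq) →
        |∫ x, ⟪f, ψ x⟫ ∂(jointLaw φ h Q)| ≤ sq := by
      intro Q _ hQ
      haveI := hprob h Q
      have := norm_integral_le_of_norm_le (μ := jointLaw φ h Q)
        (f := fun x => ⟪f, ψ x⟫) (integrable_const sq)
        (by filter_upwards [hQ] with x hx using by simpa [Real.norm_eq_abs] using hx)
      simpa [Real.norm_eq_abs] using this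
    have h0 := hb Q0 (haeb h hh Q0 f hf)
    have h1 := hb Q1 (haeb h hh Q1 f hf)
    calc |(∫ x, ⟪f, ψ x⟫ ∂(jointLaw φ h Q0)) - ∫ x, ⟪f, ψ x⟫ ∂(jointLaw φ h Q1)|
        ≤ |∫ x, ⟪f, ψ x⟫ ∂(jointLaw φ h Q0)| + |∫ x, ⟪f, ψ x⟫ ∂(jointLaw φ h Q1)| :=
          abs_sub _ _
      _ ≤ 2 * sq := by linarith
  have hfne : Nonempty {f : H12 // ‖f‖ ≤ 1} := ⟨⟨0, by simp⟩⟩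
  have hhne : Nonempty {h : H // ‖h‖ ≤ (Real.sqrt ν)⁻¹} :=
    ⟨⟨0, by simp⟩⟩
  constructor
  · -- Part 1
    intro h hh
    haveI := hprob h Q0; haveI := hprob h Q1
    have tvbdd : BddAbove (Set.range fun A : {A : Set (Bool × ℝ) // MeasurableSet A} =>
        |((jointLaw φ h Q0) A.1).toReal - ((jointLaw φ h Q1) A.1).toReal|) := by
      refine ⟨2, ?_⟩
      rintro x ⟨A, rfl⟩
      have h0 : ((jointLaw φ h Q0) A.1).toReal ≤ 1 := by
        calc ((jointLaw φ h Q0) A.1).toReal ≤ ((jointLaw φ h Q0) Set.univ).toReal :=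
              ENNReal.toReal_mono (measure_ne_top _ _) (measure_mono (Set.subset_univ _))
          _ = 1 := by simp
      have h1 : ((jointLaw φ h Q1) A.1).toReal ≤ 1 := by
        calc ((jointLaw φ h Q1) A.1).toReal ≤ ((jointLaw φ h Q1) Set.univ).toReal :=
              ENNReal.toReal_mono (measure_ne_top _ _) (measure_mono (Set.subset_univ _))
          _ = 1 := by simp
      have h0' : 0 ≤ ((jointLaw φ h Q0) A.1).toReal := ENNReal.toReal_nonneg
      have h1' : 0 ≤ ((jointLaw φ h Q1) A.1).toReal := ENNReal.toReal_nonneg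
      rw [abs_le]; constructor <;> linarith
    have hγ : gammaTensor φ ψ h Q0 Q1 ≤ 2 * sq * tvJoint φ h Q0 Q1 := by
      refine ciSup_le fun f => ?_
      refine abs_integral_sub_le_tv _ _ (hψm f.1) (haeb h hh Q0 f.1 f.2)
        (haeb h hh Q1 f.1 f.2) ?_
      intro A hA
      exact le_ciSup tvbdd (⟨A, hA⟩ : {A : Set (Bool × ℝ) // MeasurableSet A})
    calc (4 * sq)⁻¹ * gammaTensor φ ψ h Q0 Q1
        ≤ (4 * sq)⁻¹ * (2 * sq * tvJoint φ h Q0 Q1) :=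
          mul_le_mul_of_nonneg_left hγ (by positivity)
      _ = (1 / 2) * tvJoint φ h Q0 Q1 := by
          field_simp
          ring
  · -- Part 2
    have gbound : ∀ h : {h : H // ‖h‖ ≤ (Real.sqrt ν)⁻¹},
        gammaTensor φ ψ h.1 Q0 Q1 ≤ 2 * sq := fun h =>
      ciSup_le fun f => gterm h.1 h.2 f.1 f.2
    have bddGamma : BddAbove (Set.range fun h : {h : H // ‖h‖ ≤ (Real.sqrt ν)⁻¹} =>
        gammaTensor φ ψ h.1 Q0 Q1) := ⟨2 * sq, by rintro x ⟨h, rfl⟩; exact gbound h⟩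
    have key : ∀ h : {h : H // ‖h‖ ≤ (Real.sqrt ν)⁻¹},
        DPv φ h.1 Q0 Q1 ≤ normId * gammaTensor φ ψ h.1 Q0 Q1 := by
      rintro ⟨h, hh⟩
      set f : H12 := normId⁻¹ • fId with hfdef
      have hfn : ‖f‖ ≤ 1 := by
        rw [hfdef, norm_smul, hfIdnorm, Real.norm_eq_abs,
          abs_of_pos (inv_pos.2 hnormId), inv_mul_cancel₀ hnormId.ne']
      have hint : ∀ (Q : Measure (Z × Bool)) [IsProbabilityMeasure Q],
          ∫ x, ⟪f, ψ x⟫ ∂(jointLaw φ h Q) = normId⁻¹ * ∫ zy : Z × Bool, clf φ h zy.1 ∂Q := by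
        intro Q _
        rw [jointLaw, integral_map (hmm h).aemeasurable (hψm f).aestronglyMeasurable]
        have : ∀ zy : Z × Bool, ⟪f, ψ (zy.2, clf φ h zy.1)⟫ = normId⁻¹ * clf φ h zy.1 := by
          intro zy
          rw [hfdef, real_inner_smul_left, hfId zy.2 _ (hclf01 h hh zy.1)]
        simp_rw [this]
        rw [integral_const_mul]
      have hDP : ∀ (Q : Measure (Z × Bool)) [IsProbabilityMeasure Q],
          ∫ z, clf φ h z ∂(Q.map Prod.fst) = ∫ zy : Z × Bool, clf φ h zy.1 ∂Q := by
        intro Q _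
        rw [integral_map measurable_fst.aemeasurable (hclfm h).aestronglyMeasurable]
      have hterm : |(∫ x, ⟪f, ψ x⟫ ∂(jointLaw φ h Q0)) - ∫ x, ⟪f, ψ x⟫ ∂(jointLaw φ h Q1)|
          = normId⁻¹ * DPv φ h Q0 Q1 := by
        rw [hint Q0, hint Q1, DPv, hDP Q0, hDP Q1, ← mul_sub, abs_mul,
          abs_of_pos (inv_pos.2 hnormId), abs_sub_comm]
      have fbdd : BddAbove (Set.range fun f : {f : H12 // ‖f‖ ≤ 1} =>
          |(∫ x, ⟪f.1, ψ x⟫ ∂(jointLaw φ h Q0)) - ∫ x, ⟪f.1, ψ x⟫ ∂(jointLaw φ h Q1)|) :=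
        ⟨2 * sq, by rintro x ⟨g, rfl⟩; exact gterm h hh g.1 g.2⟩
      have hle : normId⁻¹ * DPv φ h Q0 Q1 ≤ gammaTensor φ ψ h Q0 Q1 := by
        rw [← hterm]
        exact le_ciSup fbdd (⟨f, hfn⟩ : {f : H12 // ‖f‖ ≤ 1})
      calc DPv φ h Q0 Q1 = normId * (normId⁻¹ * DPv φ h Q0 Q1) := by
            field_simp
        _ ≤ normId * gammaTensor φ ψ h Q0 Q1 :=
            mul_le_mul_of_nonneg_left hle hnormId.le
    have h1 : (⨆ h : {h : H // ‖h‖ ≤ (Real.sqrt ν)⁻¹}, DPv φ h.1 Q0 Q1)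
        ≤ normId * ⨆ h : {h : H // ‖h‖ ≤ (Real.sqrt ν)⁻¹}, gammaTensor φ ψ h.1 Q0 Q1 :=
      ciSup_le fun h => (key h).trans
        (mul_le_mul_of_nonneg_left (le_ciSup bddGamma h) hnormId.le)
    rw [ge_iff_le]
    calc normId⁻¹ * ⨆ h : {h : H // ‖h‖ ≤ (Real.sqrt ν)⁻¹}, DPv φ h.1 Q0 Q1
        ≤ normId⁻¹ * (normId * ⨆ h : {h : H // ‖h‖ ≤ (Real.sqrt ν)⁻¹},
            gammaTensor φ ψ h.1 Q0 Q1) :=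
          mul_le_mul_of_nonneg_left h1 (inv_nonneg.2 hnormId.le)
      _ = ⨆ h : {h : H // ‖h‖ ≤ (Real.sqrt ν)⁻¹}, gammaTensor φ ψ h.1 Q0 Q1 := by
          field_simp


end
end
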